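/- arXiv:1903.08591 — 4 statements merged into one kernel-verified Lean document; each statement's English description precedes it below -/
import Mathlib

section
/- Let f be a piecewise contracting interval map with D ⊂ X̃, x ∈ X̃ and i ∈ {1,...,N-1}. If c_i ∈ Δ_lr(x), then none of the sets ω(x) ∩ X̃, ω(d_i^+) ∩ X̃, ω(d_i^-) ∩ X̃ contains a periodic point of f. -/
open Filter Topology Set

/-- A piecewise contracting interval map on `X = [c 0, c N]` with contraction pieces
`X_i` delimited by the points `c 0 < c 1 < … < c N`, contraction rate `lam ∈ (0,1)`,
and `fe i` the (unique) continuous `lam`-Lipschitz extension of `f` restricted to the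
`i`-th piece to its closure `[c (i-1), c i]`. The pieces are
`X_1 = [c 0, c 1)`, `X_i = (c (i-1), c i)` for `1 < i < N`, `X_N = (c (N-1), c N]`. -/
structure PCIM where
  N : ℕ
  hN : 2 ≤ N
  c : ℕ → ℝ
  lam : ℝ
  f : ℝ → ℝ
  fe : ℕ → ℝ → ℝ
  hc : StrictMonoOn c (Set.Iic N)
  hlam : lam ∈ Set.Ioo (0 : ℝ) 1
  hmap : Set.MapsTo f (Set.Icc (c 0) (c N)) (Set.Icc (c 0) (c N))
  hfe_lip : ∀ i, 1 ≤ i → i ≤ N →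
    ∀ x ∈ Set.Icc (c (i - 1)) (c i), ∀ y ∈ Set.Icc (c (i - 1)) (c i),
      |fe i x - fe i y| ≤ lam * |x - y|
  hfe_eq : ∀ i, 1 ≤ i → i ≤ N → ∀ x ∈ Set.Ioo (c (i - 1)) (c i), fe i x = f x
  hfe_left : fe 1 (c 0) = f (c 0)
  hfe_right : fe N (c N) = f (c N)

namespace PCIM

variable (P : PCIM)

/-- The phase space `X = [c 0, c N]`. -/
def X : Set ℝ := Set.Icc (P.c 0) (P.c P.N)

/-- The `i`-th contraction piece (`1 ≤ i ≤ N`). -/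
def piece (i : ℕ) : Set ℝ :=
  Set.Ioo (P.c (i - 1)) (P.c i)
    ∪ (if i = 1 then {P.c 0} else (∅ : Set ℝ))
    ∪ (if i = P.N then {P.c P.N} else (∅ : Set ℝ))

/-- `Δ`, the set of interior boundary points of the pieces. -/
def Δ : Set ℝ := {y | ∃ i, 1 ≤ i ∧ i < P.N ∧ y = P.c i}

/-- `X̃ = ⋂ n, f⁻ⁿ(X \ Δ)`: points whose whole forward orbit stays in `X` and avoids `Δ`. -/
def Xt : Set ℝ := {x | ∀ n : ℕ, P.f^[n] x ∈ P.X \ P.Δ}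

/-- Forward orbit of `x`. -/
def orbit (x : ℝ) : Set ℝ := Set.range fun n : ℕ => P.f^[n] x

/-- The ω-limit set of `x`: limits of subsequences of the forward orbit. -/
def omega (x : ℝ) : Set ℝ :=
  {y | ∃ φ : ℕ → ℕ, StrictMono φ ∧
    Filter.Tendsto (fun n => P.f^[φ n] x) Filter.atTop (nhds y)}

/-- `d_i^- = f_i (c_i)`, the left lateral limit of `f` at `c i`. -/
def dminus (i : ℕ) : ℝ := P.fe i (P.c i)

/-- `d_i^+ = f_{i+1} (c_i)`, the right lateral limit of `f` at `c i`. -/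
def dplus (i : ℕ) : ℝ := P.fe (i + 1) (P.c i)

/-- `D⁻ = {d_1^-, …, d_{N-1}^-}`. -/
def Dminus : Set ℝ := {y | ∃ i, 1 ≤ i ∧ i < P.N ∧ y = P.dminus i}

/-- `D⁺ = {d_1^+, …, d_{N-1}^+}`. -/
def Dplus : Set ℝ := {y | ∃ i, 1 ≤ i ∧ i < P.N ∧ y = P.dplus i}

/-- `D`, the set of all one-sided limits of `f` at endpoints of the pieces. -/
def D : Set ℝ := P.Dminus ∪ P.Dplus ∪ {P.fe 1 (P.c 0), P.fe P.N (P.c P.N)}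

/-- `A` is pseudo-invariant: for every `x ∈ A` at least one one-sided limit of `f`
at `x` (i.e. some `fe i x` with `x` in the closure of the `i`-th piece) belongs to `A`. -/
def PseudoInvariant (A : Set ℝ) : Prop :=
  ∀ x ∈ A, ∃ i, 1 ≤ i ∧ i ≤ P.N ∧ x ∈ Set.Icc (P.c (i - 1)) (P.c i) ∧ P.fe i x ∈ A

/-- `F_i(A) = closure (f (A ∩ X_i))`. -/
def Fmap (i : ℕ) (A : Set ℝ) : Set ℝ := closure (P.f '' (A ∩ P.piece i))

/-- For a word `w = [i_1, …, i_n]`, the set `F_{i_n} ∘ … ∘ F_{i_1} (X)`. -/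
def atomOf (w : List ℕ) : Set ℝ := w.foldl (fun S i => P.Fmap i S) P.X

/-- `A` is an atom of generation `n`. -/
def IsAtomGen (n : ℕ) (A : Set ℝ) : Prop :=
  ∃ w : List ℕ, w.length = n ∧ (∀ i ∈ w, 1 ≤ i ∧ i ≤ P.N) ∧
    A = P.atomOf w ∧ A.Nonempty

/-- `Lam n` is `Λ_{n+1}` of the paper: `Λ_1 = closure (f(X \ Δ))`,
`Λ_{n+1} = closure (f(Λ_n \ Δ))`. -/
def Lam (P : PCIM) : ℕ → Set ℝ
  | 0 => closure (P.f '' (P.X \ P.Δ))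
  | n + 1 => closure (P.f '' (P.Lam n \ P.Δ))

/-- The attractor `Λ = ⋂_{n ≥ 1} Λ_n`. -/
def attractor : Set ℝ := ⋂ n : ℕ, P.Lam n

/-- `c i ∈ Δ_lr(x)`: the boundary point `c i` is left-right recurrently visited by the
orbit of `x`. -/
def lrVisited (x : ℝ) (i : ℕ) : Prop :=
  1 ≤ i ∧ i < P.N ∧
  ∃ l r : ℕ → ℕ, StrictMono l ∧ StrictMono r ∧
    (∀ j, P.f^[l j] x ∈ P.piece i) ∧ (∀ j, P.f^[r j] x ∈ P.piece (i + 1)) ∧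
    Filter.Tendsto (fun j => P.f^[l j] x) Filter.atTop (nhds (P.c i)) ∧
    Filter.Tendsto (fun j => P.f^[r j] x) Filter.atTop (nhds (P.c i))

/-- `c i ∈ Δ_lr`: `c i` is left-right recurrently visited by the orbit of some point
of `X̃`. -/
def inΔlr (i : ℕ) : Prop := ∃ x ∈ P.Xt, P.lrVisited x i

/-- The set `Δ_lr ⊆ Δ`. -/
def ΔlrSet : Set ℝ := {y | ∃ i, P.inΔlr i ∧ y = P.c i}

/-- The relation `∼⁺` on `Δ_lr`: `c_i ∼⁺ c_j` iff `c_i = c_j` or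
(`c_i ∈ Δ_lr(d_j^+)` and `c_j ∈ Δ_lr(d_i^+)`). -/
def simP (a b : ℝ) : Prop :=
  a = b ∨ ∃ i j, P.inΔlr i ∧ P.inΔlr j ∧ a = P.c i ∧ b = P.c j ∧
    P.lrVisited (P.dplus j) i ∧ P.lrVisited (P.dplus i) j

/-- The relation `≼⁺` (on representatives): `[c_i] ≼⁺ [c_j]` iff `[c_i] = [c_j]` or
`c_i ∈ Δ_lr(d_j^+)`. -/
def preP (a b : ℝ) : Prop :=
  P.simP a b ∨ ∃ i j, P.inΔlr i ∧ P.inΔlr j ∧ a = P.c i ∧ b = P.c j ∧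
    P.lrVisited (P.dplus j) i

/-- `[c i]` is a minimal class for the partial order `≼⁺`. -/
def MinimalClass (i : ℕ) : Prop :=
  P.inΔlr i ∧ ∀ j, P.inΔlr j → P.preP (P.c j) (P.c i) → P.simP (P.c j) (P.c i)

/-- `f` is injective on each contraction piece. -/
def InjPieces : Prop := ∀ i, 1 ≤ i → i ≤ P.N → Set.InjOn P.f (P.piece i)

/-- `f` is (strictly) increasing on each contraction piece. -/
def IncrPieces : Prop := ∀ i, 1 ≤ i → i ≤ P.N → StrictMonoOn P.f (P.piece i)

/-- `x` is a periodic point of `f`. -/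
def IsPeriodic (x : ℝ) : Prop := ∃ p : ℕ, 1 ≤ p ∧ P.f^[p] x = x

/-- `η` is the itinerary of `x`: `f^[n] x ∈ X_{η n}` for all `n`. -/
def IsItinerary (x : ℝ) (η : ℕ → ℕ) : Prop :=
  ∀ n, 1 ≤ η n ∧ η n ≤ P.N ∧ P.f^[n] x ∈ P.piece (η n)

end PCIM

/-- The word of length `n` of the sequence `η` starting at position `t`. -/
def wordAt (η : ℕ → ℕ) (t n : ℕ) : List ℕ := (List.range n).map fun m => η (t + m)

/-- The complexity function of the sequence `η`: the number of distinct words of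
length `n` occurring in `η`. -/
noncomputable def complexity (η : ℕ → ℕ) (n : ℕ) : ℕ := Set.ncard {w : List ℕ | ∃ t, w = wordAt η t n}

/-!
On `X̃` the map `f` is locally `λ`-contracting. Hence if a periodic point `q ∈ X̃` lies in `ω(x)`,
the orbit of `x` is eventually shadowed by the orbit of `q`, and `ω(x)` is contained in that finite
orbit, which avoids `Δ`; but `c_i ∈ ω(x)`. The points `d_i^±` are limits of `f(f^n x)` along the
one-sided visits of the orbit to `c_i`; as they lie in `X̃`, their ω-limit sets lie in `ω(x)`.
-/

theorem continuousWithinAt_of_eventually_abs_sub_le {g : ℝ → ℝ} {s : Set ℝ} {y L : ℝ}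
    (h : ∀ᶠ z in 𝓝[s] y, |g z - g y| ≤ L * |z - y|) : ContinuousWithinAt g s y := by
  rw [ContinuousWithinAt, tendsto_iff_norm_sub_tendsto_zero]
  have hL : Tendsto (fun z => L * |z - y|) (𝓝[s] y) (𝓝 0) := by
    have := ((continuous_sub_right y).abs.const_mul L).tendsto y
    simpa using this.mono_left nhdsWithin_le_nhds
  exact squeeze_zero' (Eventually.of_forall fun _ => norm_nonneg _) h hL

namespace PCIM

variable {P : PCIM} {x y q : ℝ} {i k : ℕ}

theorem c_le_c {a b : ℕ} (hab : a ≤ b) (hb : b ≤ P.N) : P.c a ≤ P.c b :=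
  P.hc.monotoneOn (mem_Iic.2 (hab.trans hb)) (mem_Iic.2 hb) hab

theorem c_lt_c {a b : ℕ} (hab : a < b) (hb : b ≤ P.N) : P.c a < P.c b :=
  P.hc (mem_Iic.2 (hab.le.trans hb)) (mem_Iic.2 hb) hab

theorem mem_Icc_and_f_eq_fe_of_mem_piece (hk1 : 1 ≤ k) (hkN : k ≤ P.N) {w : ℝ}
    (hw : w ∈ P.piece k) : w ∈ Icc (P.c (k - 1)) (P.c k) ∧ P.f w = P.fe k w := by
  rcases hw with (hw | hw) | hw
  · exact ⟨Ioo_subset_Icc_self hw, (P.hfe_eq k hk1 hkN w hw).symm⟩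
  · split_ifs at hw with h
    · subst h
      obtain rfl : w = P.c 0 := hw
      exact ⟨⟨le_rfl, c_le_c zero_le_one hkN⟩, P.hfe_left.symm⟩
    · exact absurd hw (notMem_empty w)
  · split_ifs at hw with h
    · subst h
      obtain rfl : w = P.c P.N := hw
      exact ⟨⟨c_le_c (Nat.sub_le _ 1) le_rfl, le_rfl⟩, P.hfe_right.symm⟩
    · exact absurd hw (notMem_empty w)

theorem abs_f_sub_fe_le (hk1 : 1 ≤ k) (hkN : k ≤ P.N) {w v : ℝ} (hw : w ∈ P.piece k)
    (hv : v ∈ Icc (P.c (k - 1)) (P.c k)) : |P.f w - P.fe k v| ≤ P.lam * |w - v| := by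
  obtain ⟨hwIcc, hfw⟩ := mem_Icc_and_f_eq_fe_of_mem_piece hk1 hkN hw
  rw [hfw]
  exact P.hfe_lip k hk1 hkN w hwIcc v hv

theorem abs_f_sub_f_le_of_mem_piece (hk1 : 1 ≤ k) (hkN : k ≤ P.N) {w v : ℝ}
    (hw : w ∈ P.piece k) (hv : v ∈ P.piece k) : |P.f w - P.f v| ≤ P.lam * |w - v| := by
  obtain ⟨hvIcc, hfv⟩ := mem_Icc_and_f_eq_fe_of_mem_piece hk1 hkN hv
  rw [hfv]
  exact abs_f_sub_fe_le hk1 hkN hw hvIcc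

theorem tendsto_f_of_tendsto_piece (hk1 : 1 ≤ k) (hkN : k ≤ P.N) {u : ℕ → ℝ} {v : ℝ}
    (hu : ∀ j, u j ∈ P.piece k) (ht : Tendsto u atTop (𝓝 v))
    (hv : v ∈ Icc (P.c (k - 1)) (P.c k)) :
    Tendsto (fun j => P.f (u j)) atTop (𝓝 (P.fe k v)) := by
  rw [tendsto_iff_dist_tendsto_zero] at ht ⊢
  refine squeeze_zero (fun _ => dist_nonneg) (fun j => ?_) (by simpa using ht.const_mul P.lam)
  simpa only [Real.dist_eq] using abs_f_sub_fe_le hk1 hkN (hu j) hv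

theorem mem_piece_of_lt (hk1 : 1 ≤ k) (hkN : k ≤ P.N) {w : ℝ} (hw : w ∈ P.X)
    (hlo : k = 1 ∨ P.c (k - 1) < w) (hhi : k = P.N ∨ w < P.c k) : w ∈ P.piece k := by
  by_cases hl : P.c (k - 1) < w
  · by_cases hu : w < P.c k
    · exact Or.inl (Or.inl ⟨hl, hu⟩)
    · obtain rfl := hhi.resolve_right hu
      exact Or.inr (by rw [if_pos rfl]; exact le_antisymm hw.2 (not_lt.1 hu))
  · obtain rfl := hlo.resolve_right hl
    exact Or.inl (Or.inr (by rw [if_pos rfl]; exact le_antisymm (not_lt.1 hl) hw.1))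

theorem exists_piece_of_mem (hy : y ∈ P.X \ P.Δ) :
    ∃ k, 1 ≤ k ∧ k ≤ P.N ∧ (k = 1 ∨ P.c (k - 1) < y) ∧ (k = P.N ∨ y < P.c k) := by
  classical
  have hex : ∃ j, y ≤ P.c j := ⟨P.N, hy.1.2⟩
  have hkN : Nat.find hex ≤ P.N := Nat.find_min' hex hy.1.2
  rcases Nat.eq_zero_or_pos (Nat.find hex) with h0 | hpos
  · have hy0 : y ≤ P.c 0 := h0 ▸ Nat.find_spec hex
    exact ⟨1, le_rfl, by have := P.hN; omega, Or.inl rfl,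
      Or.inr (hy0.trans_lt (c_lt_c zero_lt_one (by have := P.hN; omega)))⟩
  · refine ⟨Nat.find hex, hpos, hkN, Or.inr (not_le.1 (Nat.find_min hex (by omega))), ?_⟩
    rcases (Nat.find_spec hex).lt_or_eq with h | h
    · exact Or.inr h
    · by_contra hne
      exact hy.2 ⟨Nat.find hex, hpos, lt_of_le_of_ne hkN (not_or.1 hne).1, h⟩

theorem eventually_abs_f_sub_le (hy : y ∈ P.X \ P.Δ) :
    ∀ᶠ z in 𝓝[P.X \ P.Δ] y, |P.f z - P.f y| ≤ P.lam * |z - y| := by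
  obtain ⟨k, hk1, hkN, hlo, hhi⟩ := exists_piece_of_mem hy
  have hlo' : ∀ᶠ z in 𝓝 y, k = 1 ∨ P.c (k - 1) < z :=
    hlo.elim (fun h => Eventually.of_forall fun _ => Or.inl h)
      (fun h => (eventually_gt_nhds h).mono fun _ => Or.inr)
  have hhi' : ∀ᶠ z in 𝓝 y, k = P.N ∨ z < P.c k :=
    hhi.elim (fun h => Eventually.of_forall fun _ => Or.inl h)
      (fun h => (eventually_lt_nhds h).mono fun _ => Or.inr)
  filter_upwards [self_mem_nhdsWithin, nhdsWithin_le_nhds hlo', nhdsWithin_le_nhds hhi']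
    with z hz hzlo hzhi
  exact abs_f_sub_f_le_of_mem_piece hk1 hkN (mem_piece_of_lt hk1 hkN hz.1 hzlo hzhi)
    (mem_piece_of_lt hk1 hkN hy.1 hlo hhi)

theorem mapsTo_f_Xt : MapsTo P.f P.Xt P.Xt := fun x hx n => by
  rw [← Function.iterate_succ_apply]
  exact hx (n + 1)

theorem eventually_abs_iterate_sub_le (hy : y ∈ P.Xt) (m : ℕ) :
    ∀ᶠ z in 𝓝[P.Xt] y, |P.f^[m] z - P.f^[m] y| ≤ P.lam ^ m * |z - y| := by
  induction m generalizing y with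
  | zero => simp
  | succ m ih =>
    have hstep : ∀ᶠ z in 𝓝[P.Xt] y, |P.f z - P.f y| ≤ P.lam * |z - y| :=
      nhdsWithin_mono y (fun z (hz : z ∈ P.Xt) => hz 0) (eventually_abs_f_sub_le (hy 0))
    have hf : Tendsto P.f (𝓝[P.Xt] y) (𝓝[P.Xt] (P.f y)) :=
      tendsto_nhdsWithin_iff.2 ⟨continuousWithinAt_of_eventually_abs_sub_le hstep,
        eventually_mem_nhdsWithin.mono fun _ hz => mapsTo_f_Xt hz⟩
    filter_upwards [hstep, hf.eventually (ih (mapsTo_f_Xt hy))] with z h1 h2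
    rw [Function.iterate_succ_apply, Function.iterate_succ_apply]
    calc |P.f^[m] (P.f z) - P.f^[m] (P.f y)| ≤ P.lam ^ m * |P.f z - P.f y| := h2
      _ ≤ P.lam ^ m * (P.lam * |z - y|) :=
        mul_le_mul_of_nonneg_left h1 (pow_nonneg P.hlam.1.le m)
      _ = P.lam ^ (m + 1) * |z - y| := by ring

/-- The `p`-th iterate brings a point of `X̃` near `q` even closer to `q`, so the local estimates
for the times `≤ p` propagate to all times. -/
theorem IsPeriodic.exists_abs_iterate_sub_le (hper : P.IsPeriodic q) (hq : q ∈ P.Xt) :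
    ∃ δ > 0, ∀ z ∈ P.Xt, |z - q| < δ → ∀ n, |P.f^[n] z - P.f^[n] q| ≤ P.lam ^ n * |z - q| := by
  obtain ⟨p, hp, hpq⟩ := hper
  have hnear : ∀ᶠ z in 𝓝[P.Xt] q, ∀ s ∈ Iic p, |P.f^[s] z - P.f^[s] q| ≤ P.lam ^ s * |z - q| :=
    (finite_Iic p).eventually_all.2 fun s _ => eventually_abs_iterate_sub_le hq s
  obtain ⟨δ, hδ, hball⟩ := Metric.nhdsWithin_basis_ball.eventually_iff.1 hnear
  have hball' : ∀ z ∈ P.Xt, |z - q| < δ → ∀ s ≤ p,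
      |P.f^[s] z - P.f^[s] q| ≤ P.lam ^ s * |z - q| := fun z hz hzq =>
    hball ⟨by rwa [Metric.mem_ball, Real.dist_eq], hz⟩
  refine ⟨δ, hδ, fun z hz hzq n => ?_⟩
  induction n using Nat.strong_induction_on generalizing z with
  | _ n ih =>
  rcases le_or_gt n p with hnp | hpn
  · exact hball' z hz hzq n hnp
  have hzp : |P.f^[p] z - q| ≤ P.lam ^ p * |z - q| := by
    simpa only [hpq] using hball' z hz hzq p le_rfl
  have hzp' : |P.f^[p] z - q| < δ :=
    (hzp.trans (mul_le_of_le_one_left (abs_nonneg _)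
      (pow_le_one₀ P.hlam.1.le P.hlam.2.le))).trans_lt hzq
  calc |P.f^[n] z - P.f^[n] q|
      = |P.f^[n - p] (P.f^[p] z) - P.f^[n - p] q| := by
        rw [← Function.iterate_add_apply, Nat.sub_add_cancel hpn.le]
        conv_rhs => rw [← hpq, ← Function.iterate_add_apply, Nat.sub_add_cancel hpn.le]
    _ ≤ P.lam ^ (n - p) * |P.f^[p] z - q| :=
        ih (n - p) (by omega) _ (mapsTo_f_Xt.iterate p hz) hzp'
    _ ≤ P.lam ^ (n - p) * (P.lam ^ p * |z - q|) :=
        mul_le_mul_of_nonneg_left hzp (pow_nonneg P.hlam.1.le _)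
    _ = P.lam ^ n * |z - q| := by rw [← mul_assoc, ← pow_add, Nat.sub_add_cancel hpn.le]

theorem IsPeriodic.finite_orbit (hper : P.IsPeriodic q) : (P.orbit q).Finite := by
  obtain ⟨p, hp, hpq⟩ := hper
  refine ((finite_Iio p).image fun s => P.f^[s] q).subset ?_
  rintro _ ⟨n, rfl⟩
  exact ⟨n % p, Nat.mod_lt n hp, Function.IsPeriodicPt.iterate_mod_apply hpq n⟩

theorem mem_omega_iff : y ∈ P.omega x ↔ MapClusterPt y atTop (fun n => P.f^[n] x) :=
  ⟨fun ⟨_, hφ, hy⟩ => hy.mapClusterPt.of_comp hφ.tendsto_atTop, MapClusterPt.tendsto_subseq⟩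

theorem isClosed_omega : IsClosed (P.omega x) := by
  have : P.omega x = {y | ClusterPt y (map (fun n => P.f^[n] x) atTop)} :=
    ext fun _ => mem_omega_iff
  rw [this]
  exact isClosed_setOfPred_clusterPt

theorem iterate_mem_omega (hx : x ∈ P.Xt) {d : ℝ} (hd : d ∈ P.omega x) (hdX : d ∈ P.Xt)
    (m : ℕ) : P.f^[m] d ∈ P.omega x := by
  have hcont : ContinuousWithinAt P.f^[m] P.Xt d :=
    continuousWithinAt_of_eventually_abs_sub_le (eventually_abs_iterate_sub_le hdX m)
  have horbit : Tendsto (fun n => P.f^[n] x) atTop (𝓟 P.Xt) :=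
    tendsto_principal.2 (Eventually.of_forall fun n => mapsTo_f_Xt.iterate n hx)
  have hshift := (mem_omega_iff.1 hd).tendsto_comp' (hcont.mono_left (inf_le_inf_left _ horbit))
  have hcomp : P.f^[m] ∘ (fun n => P.f^[n] x) = (fun n => P.f^[n] x) ∘ (· + m) :=
    funext fun n => by
      rw [Function.comp_apply, Function.comp_apply, add_comm, Function.iterate_add_apply]
  exact mem_omega_iff.2 (MapClusterPt.of_comp (tendsto_add_atTop_nat m) (hcomp ▸ hshift))

theorem omega_subset_omega (hx : x ∈ P.Xt) {d : ℝ} (hd : d ∈ P.omega x) (hdX : d ∈ P.Xt) :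
    P.omega d ⊆ P.omega x := fun _ hy =>
  isClosed_omega.mem_of_mapClusterPt (mem_omega_iff.1 hy)
    (Eventually.of_forall (iterate_mem_omega hx hd hdX))

/-- Once the orbit of `x` comes close enough to the periodic point `q`, it is shadowed by the
orbit of `q` with exponentially decreasing error, so it can only accumulate on the orbit of `q`. -/
theorem omega_subset_orbit (hx : x ∈ P.Xt) (hq : q ∈ P.omega x) (hqX : q ∈ P.Xt)
    (hper : P.IsPeriodic q) : P.omega x ⊆ P.orbit q := by
  obtain ⟨δ, hδ, hcontr⟩ := hper.exists_abs_iterate_sub_le hqX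
  obtain ⟨n₀, hn₀⟩ := ((mem_omega_iff.1 hq).frequently (Metric.ball_mem_nhds q hδ)).exists
  rw [Real.dist_eq] at hn₀
  rintro y ⟨φ, hφ, hy⟩
  have hφ₀ : Tendsto (fun j => φ j - n₀) atTop atTop :=
    (tendsto_sub_atTop_nat n₀).comp hφ.tendsto_atTop
  have hbound : ∀ᶠ j in atTop, dist (P.f^[φ j] x) (P.f^[φ j - n₀] q) ≤
      P.lam ^ (φ j - n₀) * |P.f^[n₀] x - q| := by
    filter_upwards [hφ.tendsto_atTop.eventually_ge_atTop n₀] with j hj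
    rw [Real.dist_eq, ← Nat.sub_add_cancel hj, Function.iterate_add_apply, Nat.add_sub_cancel]
    exact hcontr _ (mapsTo_f_Xt.iterate n₀ hx) hn₀ _
  have hdecay : Tendsto (fun j => P.lam ^ (φ j - n₀) * |P.f^[n₀] x - q|) atTop (𝓝 0) := by
    simpa using ((tendsto_pow_atTop_nhds_zero_of_lt_one P.hlam.1.le P.hlam.2).comp
      hφ₀).mul_const |P.f^[n₀] x - q|
  have hshadow : Tendsto (fun j => P.f^[φ j - n₀] q) atTop (𝓝 y) :=
    hy.congr_dist (squeeze_zero' (Eventually.of_forall fun _ => dist_nonneg) hbound hdecay)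
  exact hper.finite_orbit.isClosed.mem_of_tendsto hshadow
    (Eventually.of_forall fun j => ⟨_, rfl⟩)

theorem c_mem_omega (hi : P.lrVisited x i) : P.c i ∈ P.omega x := by
  obtain ⟨-, -, l, -, hl, -, -, -, hlt, -⟩ := hi
  exact ⟨l, hl, hlt⟩

theorem dminus_mem_omega (hi : P.lrVisited x i) : P.dminus i ∈ P.omega x := by
  obtain ⟨hi1, hiN, l, -, hl, -, hlp, -, hlt, -⟩ := hi
  refine ⟨fun j => l j + 1, hl.add_const 1, ?_⟩
  simp only [Function.iterate_succ_apply']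
  exact tendsto_f_of_tendsto_piece hi1 hiN.le hlp hlt ⟨c_le_c (Nat.sub_le i 1) hiN.le, le_rfl⟩

theorem dplus_mem_omega (hi : P.lrVisited x i) : P.dplus i ∈ P.omega x := by
  obtain ⟨-, hiN, -, r, -, hr, -, hrp, -, hrt⟩ := hi
  refine ⟨fun j => r j + 1, hr.add_const 1, ?_⟩
  simp only [Function.iterate_succ_apply']
  exact tendsto_f_of_tendsto_piece (Nat.le_add_left 1 i) hiN hrp hrt
    ⟨le_rfl, c_le_c (Nat.le_succ i) hiN⟩

theorem not_isPeriodic_of_mem_omega (hx : x ∈ P.Xt) (hi : P.lrVisited x i)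
    (hq : q ∈ P.omega x) (hqX : q ∈ P.Xt) : ¬ P.IsPeriodic q := fun hper => by
  obtain ⟨n, hn⟩ := omega_subset_orbit hx hq hqX hper (c_mem_omega hi)
  exact (hqX n).2 ⟨i, hi.1, hi.2.1, hn⟩

end PCIM

/-- If `D ⊆ X̃`, `x ∈ X̃` and `c i ∈ Δ_lr(x)`, then none of `ω(x) ∩ X̃`,
`ω(d_i^+) ∩ X̃`, `ω(d_i^-) ∩ X̃` contains a periodic point of `f`. -/
theorem stmt13 (P : PCIM) (hD : P.D ⊆ P.Xt) (x : ℝ) (hx : x ∈ P.Xt)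
    (i : ℕ) (hi : P.lrVisited x i) :
    (∀ q ∈ P.omega x ∩ P.Xt, ¬ P.IsPeriodic q) ∧
      (∀ q ∈ P.omega (P.dplus i) ∩ P.Xt, ¬ P.IsPeriodic q) ∧
      (∀ q ∈ P.omega (P.dminus i) ∩ P.Xt, ¬ P.IsPeriodic q) := by
  have hdplus : P.dplus i ∈ P.Xt := hD (Or.inl (Or.inr ⟨i, hi.1, hi.2.1, rfl⟩))
  have hdminus : P.dminus i ∈ P.Xt := hD (Or.inl (Or.inl ⟨i, hi.1, hi.2.1, rfl⟩))
  refine ⟨fun q hq => ?_, fun q hq => ?_, fun q hq => ?_⟩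
  · exact PCIM.not_isPeriodic_of_mem_omega hx hi hq.1 hq.2
  · exact PCIM.not_isPeriodic_of_mem_omega hx hi
      (PCIM.omega_subset_omega hx (PCIM.dplus_mem_omega hi) hdplus hq.1) hq.2
  · exact PCIM.not_isPeriodic_of_mem_omega hx hi
      (PCIM.omega_subset_omega hx (PCIM.dminus_mem_omega hi) hdminus hq.1) hq.2
end

section
/- Let f be a piecewise contracting interval map with D ⊂ X̃ and x ∈ X̃. If there exist i, k ∈ {1,...,N-1} with c_i ∈ Δ_lr(d_k^+) and c_k ∈ Δ_lr(x), then c_i ∈ Δ_lr(x). -/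
open Filter Topology Set

section Aux

open Filter Topology Set

variable (P : PCIM)

lemma aux_c_lt {a b : ℕ} (hab : a < b) (hb : b ≤ P.N) : P.c a < P.c b :=
  P.hc (Set.mem_Iic.2 (hab.le.trans hb)) (Set.mem_Iic.2 hb) hab

lemma aux_fe_contOn {i : ℕ} (h1 : 1 ≤ i) (h2 : i ≤ P.N) :
    ContinuousOn (P.fe i) (Set.Icc (P.c (i - 1)) (P.c i)) := by
  have hl : LipschitzOnWith (Real.toNNReal P.lam) (P.fe i)
      (Set.Icc (P.c (i - 1)) (P.c i)) := by
    rw [lipschitzOnWith_iff_dist_le_mul]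
    intro a ha b hb
    rw [Real.dist_eq, Real.dist_eq, Real.coe_toNNReal _ P.hlam.1.le]
    exact P.hfe_lip i h1 h2 a ha b hb
  exact hl.continuousOn

lemma aux_Ioo_subset_piece (i : ℕ) :
    Set.Ioo (P.c (i - 1)) (P.c i) ⊆ P.piece i :=
  fun _ h => Or.inl (Or.inl h)

lemma aux_mem_Ioo_left {i : ℕ} (hi1 : 1 ≤ i) (hiN : i < P.N) {u : ℝ}
    (hu : u ∈ P.piece i) (hclose : |u - P.c i| < P.c i - P.c (i - 1)) :
    u ∈ Set.Ioo (P.c (i - 1)) (P.c i) := by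
  have hlt : P.c (i - 1) < P.c i := aux_c_lt P (Nat.sub_lt hi1 one_pos) hiN.le
  rcases hu with (h | h) | h
  · exact h
  · by_cases hi : i = 1
    · rw [if_pos hi] at h
      rw [Set.mem_singleton_iff] at h
      exfalso
      have h0 : P.c 0 = P.c (i - 1) := by rw [hi]
      rw [h, h0, abs_of_nonpos (by linarith)] at hclose
      linarith
    · rw [if_neg hi] at h; exact absurd h (Set.notMem_empty _)
  · by_cases hi : i = P.N
    · exact absurd hi (Nat.ne_of_lt hiN)
    · rw [if_neg hi] at h; exact absurd h (Set.notMem_empty _)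

lemma aux_mem_Ioo_right {i : ℕ} (hi1 : 1 ≤ i) (hiN : i < P.N) {u : ℝ}
    (hu : u ∈ P.piece (i + 1)) (hclose : |u - P.c i| < P.c (i + 1) - P.c i) :
    u ∈ Set.Ioo (P.c i) (P.c (i + 1)) := by
  have hlt : P.c i < P.c (i + 1) := aux_c_lt P (Nat.lt_succ_self i) hiN
  rcases hu with (h | h) | h
  · simpa only [Nat.add_sub_cancel] using h
  · by_cases hi : i + 1 = 1
    · exfalso; omega
    · rw [if_neg hi] at h; exact absurd h (Set.notMem_empty _)
  · by_cases hi : i + 1 = P.N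
    · rw [if_pos hi] at h
      rw [Set.mem_singleton_iff] at h
      exfalso
      have h0 : P.c P.N = P.c (i + 1) := by rw [hi]
      rw [h, h0, abs_of_nonneg (by linarith)] at hclose
      linarith
    · rw [if_neg hi] at h; exact absurd h (Set.notMem_empty _)

lemma aux_exists_piece {y : ℝ} (hyX : y ∈ P.X) (hyD : y ∉ P.Δ)
    (h0 : y ≠ P.c 0) (hNe : y ≠ P.c P.N) :
    ∃ j, 1 ≤ j ∧ j ≤ P.N ∧ y ∈ Set.Ioo (P.c (j - 1)) (P.c j) := by
  classical
  have hyX' : y ∈ Set.Icc (P.c 0) (P.c P.N) := hyX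
  have hex : ∃ j, j ≤ P.N ∧ y ≤ P.c j := ⟨P.N, le_refl _, hyX'.2⟩
  obtain ⟨hjN, hjy⟩ := Nat.find_spec hex
  set j := Nat.find hex with hjdef
  have hj1 : 1 ≤ j := by
    rcases Nat.eq_zero_or_pos j with h | h
    · exfalso
      apply h0
      have : y ≤ P.c 0 := by rw [← h]; exact hjy
      exact le_antisymm this hyX'.1
    · exact h
  refine ⟨j, hj1, hjN, ?_, ?_⟩
  · have hmin := Nat.find_min hex (show j - 1 < j from Nat.sub_lt hj1 one_pos)
    push_neg at hmin
    exact hmin (by omega)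
  · rcases lt_or_eq_of_le hjy with h | h
    · exact h
    · exfalso
      by_cases hjN' : j = P.N
      · exact hNe (by rw [h, hjN'])
      · exact hyD ⟨j, hj1, lt_of_le_of_ne hjN hjN', h⟩

lemma aux_contWithin {y : ℝ} (hy : y ∈ P.X \ P.Δ) :
    ContinuousWithinAt P.f P.X y := by
  obtain ⟨hyX, hyD⟩ := hy
  have hyX' : y ∈ Set.Icc (P.c 0) (P.c P.N) := hyX
  have hNle : (1 : ℕ) ≤ P.N := le_trans one_le_two P.hN
  have h10 : (1 : ℕ) - 1 = 0 := rfl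
  by_cases h0 : y = P.c 0
  · subst h0
    have hc01 : P.c 0 < P.c 1 := aux_c_lt P one_pos hNle
    rw [← continuousWithinAt_inter (Iio_mem_nhds hc01)]
    have hsub : P.X ∩ Set.Iio (P.c 1) ⊆ Set.Icc (P.c (1 - 1)) (P.c 1) := by
      intro z hz
      rw [h10]
      exact ⟨hz.1.1, le_of_lt hz.2⟩
    have hcont : ContinuousWithinAt (P.fe 1) (P.X ∩ Set.Iio (P.c 1)) (P.c 0) :=
      ((aux_fe_contOn P le_rfl hNle).mono hsub) (P.c 0) ⟨hyX, hc01⟩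
    refine hcont.congr ?_ P.hfe_left.symm
    intro z hz
    rcases eq_or_lt_of_le hz.1.1 with h | h
    · rw [← h]; exact P.hfe_left.symm
    · refine (P.hfe_eq 1 le_rfl hNle z ?_).symm
      rw [h10]
      exact ⟨h, hz.2⟩
  by_cases hN : y = P.c P.N
  · subst hN
    have hN1 : P.N - 1 < P.N := Nat.sub_lt (by omega) one_pos
    have hcN : P.c (P.N - 1) < P.c P.N := aux_c_lt P hN1 le_rfl
    rw [← continuousWithinAt_inter (Ioi_mem_nhds hcN)]
    have hsub : P.X ∩ Set.Ioi (P.c (P.N - 1)) ⊆ Set.Icc (P.c (P.N - 1)) (P.c P.N) :=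
      fun z hz => ⟨le_of_lt hz.2, hz.1.2⟩
    have hcont : ContinuousWithinAt (P.fe P.N) (P.X ∩ Set.Ioi (P.c (P.N - 1)))
        (P.c P.N) :=
      ((aux_fe_contOn P hNle le_rfl).mono hsub) (P.c P.N) ⟨hyX, hcN⟩
    refine hcont.congr ?_ P.hfe_right.symm
    intro z hz
    rcases eq_or_lt_of_le hz.1.2 with h | h
    · rw [h]; exact P.hfe_right.symm
    · exact (P.hfe_eq P.N hNle le_rfl z ⟨hz.2, h⟩).symm
  obtain ⟨j, hj1, hjN, hyIoo⟩ := aux_exists_piece P hyX hyD h0 hN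
  have hop : Set.Ioo (P.c (j - 1)) (P.c j) ∈ 𝓝 y :=
    isOpen_Ioo.mem_nhds hyIoo
  have hcont : ContinuousAt (P.fe j) y :=
    (aux_fe_contOn P hj1 hjN).continuousAt
      (Filter.mem_of_superset hop Set.Ioo_subset_Icc_self)
  have heq : P.fe j =ᶠ[𝓝 y] P.f := by
    filter_upwards [hop] with z hz
    exact P.hfe_eq j hj1 hjN z hz
  exact (hcont.congr heq).continuousWithinAt

lemma aux_iter_contWithin {y : ℝ} (hy : y ∈ P.Xt) (m : ℕ) :
    ContinuousWithinAt (P.f^[m]) P.X y := by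
  have hy' : ∀ n : ℕ, P.f^[n] y ∈ P.X \ P.Δ := hy
  induction m with
  | zero => simpa using (continuousWithinAt_id : ContinuousWithinAt id P.X y)
  | succ m ih =>
    have hmaps : Set.MapsTo (P.f^[m]) P.X P.X := P.hmap.iterate m
    have h1 : ContinuousWithinAt P.f P.X (P.f^[m] y) := aux_contWithin P (hy' m)
    have h2 := h1.comp ih hmaps
    have : P.f ∘ P.f^[m] = P.f^[m + 1] := by
      funext z; rw [Function.iterate_succ_apply']; rfl
    rwa [this] at h2

lemma aux_tendsto_dplus {x : ℝ} (hx : x ∈ P.Xt) {k : ℕ} (hk1 : 1 ≤ k)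
    (hkN : k < P.N) {r : ℕ → ℕ} (hr : ∀ j, P.f^[r j] x ∈ P.piece (k + 1))
    (ht : Filter.Tendsto (fun j => P.f^[r j] x) Filter.atTop (𝓝 (P.c k))) :
    Filter.Tendsto (fun j => P.f^[r j + 1] x) Filter.atTop (𝓝 (P.dplus k)) := by
  have hk1N : k + 1 ≤ P.N := hkN
  have hck : P.c k < P.c (k + 1) := aux_c_lt P (Nat.lt_succ_self k) hk1N
  have hev : ∀ᶠ j in Filter.atTop, P.f^[r j] x ∈ Set.Ioo (P.c k) (P.c (k + 1)) := by
    have hd := Metric.tendsto_nhds.1 ht (P.c (k + 1) - P.c k) (by linarith)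
    filter_upwards [hd] with j hj
    exact aux_mem_Ioo_right P hk1 hkN (hr j) (by rwa [Real.dist_eq] at hj)
  have hIccmem : P.c k ∈ Set.Icc (P.c (k + 1 - 1)) (P.c (k + 1)) := by
    simp only [Nat.add_sub_cancel]
    exact ⟨le_refl _, hck.le⟩
  have hcw : ContinuousWithinAt (P.fe (k + 1))
      (Set.Icc (P.c (k + 1 - 1)) (P.c (k + 1))) (P.c k) :=
    aux_fe_contOn P (by omega) hk1N (P.c k) hIccmem
  have htw : Filter.Tendsto (fun j => P.f^[r j] x) Filter.atTop
      (𝓝[Set.Icc (P.c (k + 1 - 1)) (P.c (k + 1))] (P.c k)) := by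
    rw [tendsto_nhdsWithin_iff]
    refine ⟨ht, ?_⟩
    filter_upwards [hev] with j hj
    simp only [Nat.add_sub_cancel]
    exact ⟨hj.1.le, hj.2.le⟩
  have hfinal := hcw.tendsto.comp htw
  have hdp : P.dplus k = P.fe (k + 1) (P.c k) := rfl
  rw [hdp]
  refine hfinal.congr' ?_
  filter_upwards [hev] with j hj
  show P.fe (k + 1) (P.f^[r j] x) = P.f^[r j + 1] x
  rw [Function.iterate_succ_apply']
  refine P.hfe_eq (k + 1) (by omega) hk1N _ ?_
  simpa only [Nat.add_sub_cancel] using hj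

end Aux

/-- If `D ⊆ X̃`, `x ∈ X̃`, `c_i ∈ Δ_lr(d_k^+)` and `c_k ∈ Δ_lr(x)`, then
`c_i ∈ Δ_lr(x)`. -/
theorem stmt14 (P : PCIM) (hD : P.D ⊆ P.Xt) (x : ℝ) (hx : x ∈ P.Xt)
    (i k : ℕ) (h1 : P.lrVisited (P.dplus k) i) (h2 : P.lrVisited x k) :
    P.lrVisited x i := by
  obtain ⟨hi1, hiN, l1, r1, hl1m, hr1m, hl1p, hr1p, hl1t, hr1t⟩ := h1
  obtain ⟨hk1, hkN, l2, r2, hl2m, hr2m, hl2p, hr2p, hl2t, hr2t⟩ := h2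
  have hyXt : P.dplus k ∈ P.Xt := hD (Or.inl (Or.inr ⟨k, hk1, hkN, rfl⟩))
  set y := P.dplus k with hy
  have hz : Filter.Tendsto (fun t => P.f^[r2 t + 1] x) Filter.atTop (𝓝 y) :=
    aux_tendsto_dplus P hx hk1 hkN hr2p hr2t
  have hzX : ∀ t : ℕ, P.f^[r2 t + 1] x ∈ P.X := fun t => (hx (r2 t + 1)).1
  have key : ∀ U : Set ℝ, IsOpen U → (∃ᶠ j in Filter.atTop, P.f^[j] y ∈ U) →
      ∃ᶠ m in Filter.atTop, P.f^[m] x ∈ U := by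
    intro U hU hfreq
    rw [Filter.frequently_atTop] at hfreq ⊢
    intro M
    obtain ⟨j, hjM, hjU⟩ := hfreq M
    have hcw : ContinuousWithinAt (P.f^[j]) P.X y := aux_iter_contWithin P hyXt j
    have htz : Filter.Tendsto (fun t => P.f^[r2 t + 1] x) Filter.atTop (𝓝[P.X] y) := by
      rw [tendsto_nhdsWithin_iff]
      exact ⟨hz, Filter.Eventually.of_forall hzX⟩
    have hevU := (hcw.tendsto.comp htz).eventually (hU.eventually_mem hjU)
    obtain ⟨t, ht⟩ := hevU.exists
    refine ⟨j + (r2 t + 1), le_trans hjM (Nat.le_add_right _ _), ?_⟩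
    rw [Function.iterate_add_apply]
    exact ht
  have hcii : P.c (i - 1) < P.c i := aux_c_lt P (Nat.sub_lt hi1 one_pos) hiN.le
  have hcii2 : P.c i < P.c (i + 1) := aux_c_lt P (Nat.lt_succ_self i) hiN
  -- left sequence
  have hfreqL : ∀ n : ℕ, ∃ᶠ m in Filter.atTop,
      P.f^[m] x ∈ Set.Ioo (max (P.c (i - 1)) (P.c i - 1 / (n + 1))) (P.c i) := by
    intro n
    apply key _ isOpen_Ioo
    have hev : ∀ᶠ j in Filter.atTop,
        P.f^[l1 j] y ∈ Set.Ioo (max (P.c (i - 1)) (P.c i - 1 / (n + 1))) (P.c i) := by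
      have hpos : (0 : ℝ) < min (P.c i - P.c (i - 1)) (1 / (n + 1)) :=
        lt_min (by linarith) (by positivity)
      have hd := Metric.tendsto_nhds.1 hl1t _ hpos
      filter_upwards [hd] with j hj
      rw [Real.dist_eq] at hj
      have hIoo := aux_mem_Ioo_left P hi1 hiN (hl1p j)
        (lt_of_lt_of_le hj (min_le_left _ _))
      have hj2 : |P.f^[l1 j] y - P.c i| < 1 / (n + 1) :=
        lt_of_lt_of_le hj (min_le_right _ _)
      have hj3 := (abs_lt.1 hj2).1
      exact ⟨max_lt hIoo.1 (by linarith), hIoo.2⟩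
    exact hl1m.tendsto_atTop.frequently hev.frequently
  obtain ⟨φ, hφm, hφ⟩ := Filter.extraction_forall_of_frequently hfreqL
  -- right sequence
  have hfreqR : ∀ n : ℕ, ∃ᶠ m in Filter.atTop,
      P.f^[m] x ∈ Set.Ioo (P.c i) (min (P.c (i + 1)) (P.c i + 1 / (n + 1))) := by
    intro n
    apply key _ isOpen_Ioo
    have hev : ∀ᶠ j in Filter.atTop,
        P.f^[r1 j] y ∈ Set.Ioo (P.c i) (min (P.c (i + 1)) (P.c i + 1 / (n + 1))) := by
      have hpos : (0 : ℝ) < min (P.c (i + 1) - P.c i) (1 / (n + 1)) :=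
        lt_min (by linarith) (by positivity)
      have hd := Metric.tendsto_nhds.1 hr1t _ hpos
      filter_upwards [hd] with j hj
      rw [Real.dist_eq] at hj
      have hIoo := aux_mem_Ioo_right P hi1 hiN (hr1p j)
        (lt_of_lt_of_le hj (min_le_left _ _))
      have hj2 : |P.f^[r1 j] y - P.c i| < 1 / (n + 1) :=
        lt_of_lt_of_le hj (min_le_right _ _)
      have hj3 := (abs_lt.1 hj2).2
      exact ⟨hIoo.1, lt_min hIoo.2 (by linarith)⟩
    exact hr1m.tendsto_atTop.frequently hev.frequently
  obtain ⟨ψ, hψm, hψ⟩ := Filter.extraction_forall_of_frequently hfreqR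
  refine ⟨hi1, hiN, φ, ψ, hφm, hψm, ?_, ?_, ?_, ?_⟩
  · intro n
    refine aux_Ioo_subset_piece P i ⟨?_, (hφ n).2⟩
    exact lt_of_le_of_lt (le_max_left _ _) (hφ n).1
  · intro n
    have : P.f^[ψ n] x ∈ Set.Ioo (P.c (i + 1 - 1)) (P.c (i + 1)) := by
      simp only [Nat.add_sub_cancel]
      exact ⟨(hψ n).1, lt_of_lt_of_le (hψ n).2 (min_le_left _ _)⟩
    exact aux_Ioo_subset_piece P (i + 1) this
  · refine tendsto_of_tendsto_of_tendsto_of_le_of_le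
      (g := fun n : ℕ => P.c i - 1 / (n + 1)) (h := fun _ : ℕ => P.c i) ?_
      tendsto_const_nhds ?_ ?_
    · have h0 : Filter.Tendsto (fun n : ℕ => P.c i - 1 / (n + 1)) Filter.atTop
          (𝓝 (P.c i - 0)) :=
        Filter.Tendsto.sub tendsto_const_nhds tendsto_one_div_add_atTop_nhds_zero_nat
      simpa using h0
    · intro n
      exact le_of_lt (lt_of_le_of_lt (le_max_right _ _) (hφ n).1)
    · exact fun n => (hφ n).2.le
  · refine tendsto_of_tendsto_of_tendsto_of_le_of_le
      (g := fun _ : ℕ => P.c i) (h := fun n : ℕ => P.c i + 1 / (n + 1))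
      tendsto_const_nhds ?_ ?_ ?_
    · have h0 : Filter.Tendsto (fun n : ℕ => P.c i + 1 / (n + 1)) Filter.atTop
          (𝓝 (P.c i + 0)) :=
        Filter.Tendsto.add tendsto_const_nhds tendsto_one_div_add_atTop_nhds_zero_nat
      simpa using h0
    · exact fun n => (hψ n).1.le
    · intro n
      exact le_of_lt (lt_of_lt_of_le (hψ n).2 (min_le_right _ _))
end

section
/- Let f be a piecewise contracting interval map with D ⊂ X̃. Define on Δ_lr the relation c_i ∼⁺ c_j iff c_i = c_j, or (c_i ∈ Δ_lr(d_j^+) and c_j ∈ Δ_lr(d_i^+)). Then ∼⁺ is an equivalence relation on Δ_lr. -/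
open Filter Topology Set

open Filter Topology Set

namespace PCIM

variable (P : PCIM)

lemma c_lt {a b : ℕ} (h : a < b) (hb : b ≤ P.N) : P.c a < P.c b :=
  P.hc (Set.mem_Iic.2 (le_trans (le_of_lt h) hb)) (Set.mem_Iic.2 hb) h

open Classical in
/-- Local structure: each point of `X \ Δ` has a neighborhood in `X` on which `f = fe i`. -/
lemma loc {y : ℝ} (hy : y ∈ P.X \ P.Δ) :
    ∃ i, 1 ≤ i ∧ i ≤ P.N ∧ ∃ ε > (0:ℝ), ∀ x ∈ P.X, |x - y| < ε →
      x ∈ Set.Icc (P.c (i - 1)) (P.c (i)) ∧ P.f x = P.fe i x := by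
  obtain ⟨⟨hy0, hyN⟩, hyΔ⟩ := hy
  have hN1 : 1 ≤ P.N := le_trans (by norm_num) P.hN
  rcases eq_or_lt_of_le hy0 with h0 | h0
  · -- y = c 0
    subst h0
    refine ⟨1, le_refl 1, hN1, P.c 1 - P.c 0, by
      have := P.c_lt (a := 0) (b := 1) one_pos hN1; linarith, ?_⟩
    intro x ⟨hx0, _⟩ hxε
    have hx1 : x < P.c 1 := by
      rw [abs_lt] at hxε; linarith [hxε.2]
    have hIcc : x ∈ Set.Icc (P.c 0) (P.c 1) := ⟨hx0, le_of_lt hx1⟩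
    refine ⟨by simpa using hIcc, ?_⟩
    rcases eq_or_lt_of_le hx0 with hx | hx
    · rw [← hx]; exact P.hfe_left.symm
    · exact (P.hfe_eq 1 le_rfl hN1 x (by simpa using Set.mem_Ioo.2 ⟨hx, hx1⟩)).symm
  rcases eq_or_lt_of_le hyN with hN | hN
  · -- y = c N
    subst hN
    have hNN : P.c (P.N - 1) < P.c P.N := P.c_lt (Nat.sub_lt (by omega) one_pos) le_rfl
    refine ⟨P.N, hN1, le_rfl, P.c P.N - P.c (P.N - 1), by linarith, ?_⟩
    intro x ⟨_, hxN⟩ hxε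
    have hx1 : P.c (P.N - 1) < x := by
      rw [abs_lt] at hxε; linarith [hxε.1]
    refine ⟨⟨le_of_lt hx1, hxN⟩, ?_⟩
    rcases eq_or_lt_of_le hxN with hx | hx
    · rw [hx]; exact P.hfe_right.symm
    · exact (P.hfe_eq P.N hN1 le_rfl x (Set.mem_Ioo.2 ⟨hx1, hx⟩)).symm
  · -- c 0 < y < c N
    set k := Nat.findGreatest (fun m => P.c m < y) (P.N - 1) with hk
    have hkle : k ≤ P.N - 1 := Nat.findGreatest_le _
    have hkN : k + 1 ≤ P.N := by omega
    have hck : P.c k < y :=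
      Nat.findGreatest_spec (P := fun m => P.c m < y) (m := 0) (Nat.zero_le _) h0
    have hck1 : y < P.c (k + 1) := by
      rcases eq_or_lt_of_le hkN with h | h
      · rw [h]; exact hN
      · have hne : y ≠ P.c (k + 1) := by
          intro hcon
          exact hyΔ ⟨k + 1, by omega, by omega, hcon⟩
        have hnot : ¬ P.c (k + 1) < y :=
          Nat.findGreatest_is_greatest (P := fun m => P.c m < y) (n := P.N - 1)
            (by omega) (by omega)
        rcases lt_or_ge y (P.c (k+1)) with h' | h'
        · exact h'
        · exact absurd (lt_of_le_of_ne h' (Ne.symm hne)) hnot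
    refine ⟨k + 1, le_add_self, hkN, min (y - P.c k) (P.c (k + 1) - y),
      lt_min (by linarith) (by linarith), ?_⟩
    intro x _ hxε
    have hxl := lt_of_lt_of_le hxε (min_le_left _ _)
    have hxr := lt_of_lt_of_le hxε (min_le_right _ _)
    rw [abs_lt] at hxl hxr
    have hxo : x ∈ Set.Ioo (P.c k) (P.c (k + 1)) :=
      ⟨by linarith [hxl.1], by linarith [hxr.2]⟩
    refine ⟨by simpa using Set.Ioo_subset_Icc_self hxo, ?_⟩
    exact (P.hfe_eq (k + 1) le_add_self hkN x (by simpa using hxo)).symm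

/-- Sequential continuity of `f` at points of `X \ Δ` along sequences in `X`. -/
lemma tendsto_f {y : ℝ} (hy : y ∈ P.X \ P.Δ) {z : ℕ → ℝ} (hz : ∀ m, z m ∈ P.X)
    (h : Tendsto z atTop (nhds y)) :
    Tendsto (fun m => P.f (z m)) atTop (nhds (P.f y)) := by
  obtain ⟨i, hi1, hiN, ε, hε, hloc⟩ := P.loc hy
  have hyX : y ∈ P.X := hy.1
  have hyself := hloc y hyX (by simpa using hε)
  rw [tendsto_iff_norm_sub_tendsto_zero] at h ⊢
  simp only [Real.norm_eq_abs] at h ⊢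
  have hev : ∀ᶠ m in atTop, |z m - y| < ε :=
    h.eventually (eventually_lt_nhds hε) |>.mono (fun m hm => by simpa using hm)
  refine squeeze_zero' (Eventually.of_forall fun m => abs_nonneg _)
    (hev.mono fun m hm => ?_) (by simpa using h.const_mul P.lam)
  obtain ⟨hmem, heq⟩ := hloc (z m) (hz m) hm
  rw [heq, hyself.2]
  exact P.hfe_lip i hi1 hiN (z m) hmem y hyself.1

/-- Orbit shadowing: if a sequence in `X` converges to a point of `X̃`, then all
iterates of the sequence converge to the corresponding iterates. -/
lemma shadow {z : ℝ} (hz : ∀ n, P.f^[n] z ∈ P.X \ P.Δ) {w : ℕ → ℝ} (hw : ∀ m, w m ∈ P.X)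
    (h : Tendsto w atTop (nhds z)) (n : ℕ) :
    Tendsto (fun m => P.f^[n] (w m)) atTop (nhds (P.f^[n] z)) := by
  induction n with
  | zero => simpa using h
  | succ n ih =>
    simp only [Function.iterate_succ_apply']
    exact P.tendsto_f (hz n) (fun m => P.hmap.iterate n (hw m)) ih

/-- right-limit convergence: if the orbit enters piece `j+1` along a sequence
converging to `c j`, then one more iterate converges to `d_j^+`. -/
lemma base {y : ℝ} (hy : ∀ n, P.f^[n] y ∈ P.X \ P.Δ) {j : ℕ} (hj1 : 1 ≤ j) (hjN : j < P.N)
    {r : ℕ → ℕ} (hrp : ∀ m, P.f^[r m] y ∈ P.piece (j + 1))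
    (hrt : Tendsto (fun m => P.f^[r m] y) atTop (nhds (P.c j))) :
    Tendsto (fun m => P.f^[r m + 1] y) atTop (nhds (P.dplus j)) := by
  have hjj : P.c j < P.c (j + 1) := P.c_lt (Nat.lt_succ_self j) hjN
  have hev : ∀ᶠ m in atTop, |P.f^[r m] y - P.c j| < P.c (j + 1) - P.c j := by
    rw [tendsto_iff_norm_sub_tendsto_zero] at hrt
    simp only [Real.norm_eq_abs] at hrt
    exact hrt.eventually (eventually_lt_nhds (by linarith))
  have hoo : ∀ᶠ m in atTop, P.f^[r m] y ∈ Set.Ioo (P.c j) (P.c (j + 1)) := by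
    refine hev.mono fun m hm => ?_
    have hp := hrp m
    unfold piece at hp
    rcases hp with (hp | hp) | hp
    · simpa [Nat.add_sub_cancel] using hp
    · split_ifs at hp with h
      · omega
      · exact absurd hp (Set.notMem_empty _)
    · split_ifs at hp with h
      · exfalso
        have hxm : P.f^[r m] y = P.c P.N := hp
        have hcN : P.c (j + 1) ≤ P.c P.N := by
          have hd : j + 1 = P.N ∨ j + 1 < P.N := by omega
          rcases hd with h' | h'
          · rw [h']
          · exact le_of_lt (P.c_lt h' le_rfl)
        rw [hxm, abs_of_nonneg (by linarith)] at hm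
        linarith
      · exact absurd hp (Set.notMem_empty _)
  rw [tendsto_iff_norm_sub_tendsto_zero]
  simp only [Real.norm_eq_abs]
  have hrt0 : Tendsto (fun m => |P.f^[r m] y - P.c j|) atTop (nhds 0) := by
    rw [tendsto_iff_norm_sub_tendsto_zero] at hrt
    simpa [Real.norm_eq_abs] using hrt
  refine squeeze_zero' (Eventually.of_forall fun m => abs_nonneg _)
    (hoo.mono fun m hm => ?_) (by simpa using hrt0.const_mul P.lam)
  have hiter : P.f^[r m + 1] y = P.f (P.f^[r m] y) := by
    rw [Function.iterate_succ_apply']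
  rw [hiter, ← P.hfe_eq (j + 1) le_add_self (Nat.succ_le_of_lt hjN) _ (by
    simpa [Nat.add_sub_cancel] using hm)]
  unfold dplus
  exact P.hfe_lip (j + 1) le_add_self (Nat.succ_le_of_lt hjN) _
    (by simpa [Nat.add_sub_cancel] using Set.Ioo_subset_Icc_self hm) (P.c j)
    (by simp [Nat.add_sub_cancel, le_of_lt hjj])

/-- Each point of a piece has a neighborhood in `X` contained in the piece. -/
lemma piece_nbhd {p : ℕ} (hpN : p ≤ P.N) {a : ℝ} (ha : a ∈ P.piece p) :
    ∃ ε > (0:ℝ), ∀ x ∈ P.X, |x - a| < ε → x ∈ P.piece p := by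
  have hN1 : 1 ≤ P.N := le_trans (by norm_num) P.hN
  unfold piece at ha ⊢
  rcases ha with (ha | ha) | ha
  · refine ⟨min (a - P.c (p - 1)) (P.c p - a),
      lt_min (by linarith [ha.1]) (by linarith [ha.2]), ?_⟩
    intro x _ hx
    have hxl := lt_of_lt_of_le hx (min_le_left _ _)
    have hxr := lt_of_lt_of_le hx (min_le_right _ _)
    rw [abs_lt] at hxl hxr
    exact Or.inl (Or.inl ⟨by linarith [hxl.1], by linarith [hxr.2]⟩)
  · split_ifs at ha with h
    · have ha' : a = P.c 0 := ha
      subst h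
      have h01 : P.c 0 < P.c 1 := P.c_lt one_pos hN1
      refine ⟨P.c 1 - P.c 0, by linarith, ?_⟩
      intro x hxX hx
      rw [abs_lt] at hx
      rcases eq_or_lt_of_le hxX.1 with h' | h'
      · refine Or.inl (Or.inr ?_)
        rw [if_pos rfl]
        exact Set.mem_singleton_iff.2 h'.symm
      · refine Or.inl (Or.inl ?_)
        simp only [Nat.sub_self]
        exact ⟨h', by linarith [hx.2]⟩
    · exact absurd ha (Set.notMem_empty _)
  · split_ifs at ha with h
    · have ha' : a = P.c P.N := ha
      subst h
      have hNN : P.c (P.N - 1) < P.c P.N := P.c_lt (Nat.sub_lt (by omega) one_pos) le_rfl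
      refine ⟨P.c P.N - P.c (P.N - 1), by linarith, ?_⟩
      intro x hxX hx
      rw [abs_lt] at hx
      rcases eq_or_lt_of_le hxX.2 with h' | h'
      · refine Or.inr ?_
        rw [if_pos rfl]
        exact Set.mem_singleton_iff.2 h'
      · refine Or.inl (Or.inl ⟨by linarith [hx.1], h'⟩)
    · exact absurd ha (Set.notMem_empty _)

/-- Transfer lemma: if the orbit of `y ∈ X̃` approaches `c j` from the right
(within piece `j+1`), then the orbit of `y` shadows the orbit of `d_j^+`: any
recurrence of the orbit of `d_j^+` into a piece `p` accumulating at a point `q`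
is inherited by the orbit of `y`. -/
lemma transfer {y : ℝ} (hy : y ∈ P.Xt) {j : ℕ} (hj1 : 1 ≤ j) (hjN : j < P.N)
    (hz : P.dplus j ∈ P.Xt)
    {r : ℕ → ℕ} (hr : StrictMono r) (hrp : ∀ m, P.f^[r m] y ∈ P.piece (j + 1))
    (hrt : Tendsto (fun m => P.f^[r m] y) atTop (nhds (P.c j)))
    {p : ℕ} (hpN : p ≤ P.N) {q : ℝ}
    {s : ℕ → ℕ} (hsp : ∀ t, P.f^[s t] (P.dplus j) ∈ P.piece p)
    (hst : Tendsto (fun t => P.f^[s t] (P.dplus j)) atTop (nhds q)) :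
    ∃ g : ℕ → ℕ, StrictMono g ∧ (∀ t, P.f^[g t] y ∈ P.piece p) ∧
      Tendsto (fun t => P.f^[g t] y) atTop (nhds q) := by
  have hyit : ∀ n, P.f^[n] y ∈ P.X \ P.Δ := hy
  have hzit : ∀ n, P.f^[n] (P.dplus j) ∈ P.X \ P.Δ := hz
  -- the shifted sequence `w m = f^[r m + 1] y` converges to `d_j^+`
  have hwX : ∀ m, P.f^[r m + 1] y ∈ P.X := fun m => (hyit (r m + 1)).1
  have hwt : Tendsto (fun m => P.f^[r m + 1] y) atTop (nhds (P.dplus j)) :=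
    P.base hyit hj1 hjN hrp hrt
  have hshadow : ∀ n, Tendsto (fun m => P.f^[n] (P.f^[r m + 1] y)) atTop
      (nhds (P.f^[n] (P.dplus j))) := P.shadow hzit hwX hwt
  -- main claim
  have C : ∀ B : ℕ, ∀ δ : ℝ, 0 < δ → ∃ n, B < n ∧ P.f^[n] y ∈ P.piece p ∧
      |P.f^[n] y - q| < δ := by
    intro B δ hδ
    have hstq : Tendsto (fun t => |P.f^[s t] (P.dplus j) - q|) atTop (nhds 0) := by
      rw [tendsto_iff_norm_sub_tendsto_zero] at hst
      simpa [Real.norm_eq_abs] using hst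
    obtain ⟨t, ht⟩ := (hstq.eventually (eventually_lt_nhds (half_pos hδ))).exists
    obtain ⟨ε, hε, hloc⟩ := P.piece_nbhd hpN (hsp t)
    have hshad := hshadow (s t)
    have hshad0 : Tendsto (fun m => |P.f^[s t] (P.f^[r m + 1] y) -
        P.f^[s t] (P.dplus j)|) atTop (nhds 0) := by
      rw [tendsto_iff_norm_sub_tendsto_zero] at hshad
      simpa [Real.norm_eq_abs] using hshad
    obtain ⟨m0, hm0⟩ := (Filter.eventually_atTop.1
      (hshad0.eventually (eventually_lt_nhds (lt_min hε (half_pos hδ)))))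
    set m := max m0 (B + 1) with hm
    have hmm := hm0 m (le_max_left _ _)
    have hiter : P.f^[s t + (r m + 1)] y = P.f^[s t] (P.f^[r m + 1] y) :=
      Function.iterate_add_apply _ _ _ _
    refine ⟨s t + (r m + 1), ?_, ?_, ?_⟩
    · have : m ≤ r m := hr.le_apply
      omega
    · rw [hiter]
      exact hloc _ (P.hmap.iterate (s t) (hwX m)) (lt_of_lt_of_le hmm (min_le_left _ _))
    · rw [hiter]
      calc |P.f^[s t] (P.f^[r m + 1] y) - q|
          ≤ |P.f^[s t] (P.f^[r m + 1] y) - P.f^[s t] (P.dplus j)| +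
            |P.f^[s t] (P.dplus j) - q| := abs_sub_le _ _ _
        _ < δ / 2 + δ / 2 := add_lt_add (lt_of_lt_of_le hmm (min_le_right _ _)) ht
        _ = δ := add_halves δ
  choose F hF using C
  set δ : ℕ → ℝ := fun t => 1 / ((t : ℝ) + 1) with hδ
  have hδpos : ∀ t : ℕ, 0 < δ t := fun t => by positivity
  let g : ℕ → ℕ := fun t => Nat.rec (F 0 (δ 0) (hδpos 0))
    (fun t ih => F ih (δ (t + 1)) (hδpos (t + 1))) t
  have hgsucc : ∀ t, g (t + 1) = F (g t) (δ (t + 1)) (hδpos (t + 1)) := fun t => rfl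
  have hgood : ∀ t, P.f^[g t] y ∈ P.piece p ∧ |P.f^[g t] y - q| < δ t := by
    intro t
    cases t with
    | zero => exact ⟨(hF 0 (δ 0) (hδpos 0)).2.1, (hF 0 (δ 0) (hδpos 0)).2.2⟩
    | succ t =>
      rw [hgsucc t]
      exact ⟨(hF (g t) _ _).2.1, (hF (g t) _ _).2.2⟩
  refine ⟨g, strictMono_nat_of_lt_succ fun t => ?_, fun t => (hgood t).1, ?_⟩
  · rw [hgsucc t]
    exact (hF (g t) _ _).1
  · rw [tendsto_iff_norm_sub_tendsto_zero]
    simp only [Real.norm_eq_abs]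
    refine squeeze_zero (fun t => abs_nonneg _) (fun t => le_of_lt (hgood t).2) ?_
    simpa [hδ] using tendsto_one_div_add_atTop_nhds_zero_nat (𝕜 := ℝ)

/-- Transitivity of left-right recurrent visits along right lateral limits. -/
lemma lr_trans (hD : P.D ⊆ P.Xt) {i j k : ℕ} (hk1 : 1 ≤ k) (hkN : k < P.N)
    (h1 : P.lrVisited (P.dplus k) j) (h2 : P.lrVisited (P.dplus j) i) :
    P.lrVisited (P.dplus k) i := by
  obtain ⟨hj1, hjN, _, r, _, hrm, _, hrp, _, hrt⟩ := h1
  obtain ⟨hi1, hiN, l', r', hlm', hrm', hlp', hrp', hlt', hrt'⟩ := h2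
  have hzk : P.dplus k ∈ P.Xt := hD (Or.inl (Or.inr ⟨k, hk1, hkN, rfl⟩))
  have hzj : P.dplus j ∈ P.Xt := hD (Or.inl (Or.inr ⟨j, hj1, hjN, rfl⟩))
  obtain ⟨g1, hg1m, hg1p, hg1t⟩ := P.transfer hzk hj1 hjN hzj hrm hrp hrt
    (p := i) (le_of_lt hiN) hlp' hlt'
  obtain ⟨g2, hg2m, hg2p, hg2t⟩ := P.transfer hzk hj1 hjN hzj hrm hrp hrt
    (p := i + 1) (Nat.succ_le_of_lt hiN) hrp' hrt'
  exact ⟨hi1, hiN, g1, g2, hg1m, hg2m, hg1p, hg2p, hg1t, hg2t⟩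

end PCIM

/-- If `D ⊆ X̃`, the relation `∼⁺` is an equivalence relation on `Δ_lr`. -/
theorem stmt15 (P : PCIM) (hD : P.D ⊆ P.Xt) :
    Equivalence (fun a b : {y // y ∈ P.ΔlrSet} => P.simP a.1 b.1) := by
  constructor
  · intro a
    exact Or.inl rfl
  · intro a b h
    rcases h with h | ⟨i, j, hi, hj, ha, hb, h1, h2⟩
    · exact Or.inl h.symm
    · exact Or.inr ⟨j, i, hj, hi, hb, ha, h2, h1⟩
  · intro a b c hab hbc
    show P.simP a.1 c.1
    rcases hab with hab | ⟨i, j, hi, hj, ha, hb, h1, h2⟩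
    · rw [show a.1 = b.1 from hab]
      exact hbc
    · rcases hbc with hbc | ⟨j', k, hj', hk, hb', hc, h3, h4⟩
      · exact Or.inr ⟨i, j, hi, hj, ha, (show b.1 = c.1 from hbc) ▸ hb, h1, h2⟩
      · have hjj' : j = j' := by
          have hcc : P.c j = P.c j' := hb.symm.trans hb'
          obtain ⟨x, _, hx⟩ := hj
          obtain ⟨x', _, hx'⟩ := hj'
          exact P.hc.injOn (Set.mem_Iic.2 (le_of_lt hx.2.1))
            (Set.mem_Iic.2 (le_of_lt hx'.2.1)) hcc
        subst hjj'
        have hi1 : 1 ≤ i := h1.1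
        have hiN : i < P.N := h1.2.1
        have hk1 : 1 ≤ k := h4.1
        have hkN : k < P.N := h4.2.1
        exact Or.inr ⟨i, k, hi, hk, ha, hc,
          P.lr_trans hD hk1 hkN h3 h1, P.lr_trans hD hi1 hiN h2 h4⟩
end

section
/- Let f be a piecewise contracting interval map with D ⊂ X̃. Define on the quotient Δ_lr/∼⁺ the relation [c_i] ≼⁺ [c_j] iff [c_i] = [c_j] or c_i ∈ Δ_lr(d_j^+). Then ≼⁺ is well defined (independent of representatives) and is a partial order on Δ_lr/∼⁺. -/
open Filter Topology Set

open Filter Topology Set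

namespace PCIM
variable (P : PCIM)

lemma c_lt_s16 {i j : ℕ} (hij : i < j) (hj : j ≤ P.N) : P.c i < P.c j :=
  P.hc (le_trans (le_of_lt hij) hj) hj hij

lemma c_inj {i j : ℕ} (hi : i ≤ P.N) (hj : j ≤ P.N) (h : P.c i = P.c j) : i = j := by
  rcases lt_trichotomy i j with h' | h' | h'
  · exact absurd h (ne_of_lt (P.c_lt_s16 h' hj))
  · exact h'
  · exact absurd h.symm (ne_of_lt (P.c_lt_s16 h' hi))

lemma iterate_mem_X {x : ℝ} (hx : x ∈ P.X) : ∀ n, P.f^[n] x ∈ P.X := by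
  intro n
  induction n with
  | zero => exact hx
  | succ n ih => rw [Function.iterate_succ_apply']; exact P.hmap ih

lemma piece_sub_Icc {i : ℕ} (h1 : 1 ≤ i) (h2 : i ≤ P.N) :
    P.piece i ⊆ Set.Icc (P.c (i - 1)) (P.c i) := by
  intro y hy
  rcases hy with (hy | hy) | hy
  · exact Set.Ioo_subset_Icc_self hy
  · split_ifs at hy with h
    · rcases hy with rfl
      subst h
      exact ⟨le_refl _, le_of_lt (P.c_lt_s16 Nat.zero_lt_one (le_trans h1 h2))⟩
    · exact absurd hy (Set.notMem_empty _)
  · split_ifs at hy with h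
    · rcases hy with rfl
      subst h
      refine ⟨le_of_lt (P.c_lt_s16 ?_ (le_refl _)), le_refl _⟩
      omega
    · exact absurd hy (Set.notMem_empty _)

/-- Local structure around a non-boundary point of a piece. -/
lemma piece_local {w : ℝ} {i : ℕ} (hw : w ∈ P.X \ P.Δ) (h1 : 1 ≤ i) (h2 : i ≤ P.N)
    (hwp : w ∈ P.piece i) :
    ∃ ε > 0, (∀ y ∈ P.X, |y - w| < ε → y ∈ P.piece i ∧ P.f y = P.fe i y) ∧
      P.f w = P.fe i w := by
  rcases hwp with (hw' | hw') | hw'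
  · -- interior case
    refine ⟨min (w - P.c (i-1)) (P.c i - w), by simp [hw'.1, hw'.2, sub_pos], ?_, ?_⟩
    · intro y hy hylt
      have h1' : P.c (i-1) < y := by
        have := abs_lt.1 (lt_of_lt_of_le hylt (min_le_left _ _))
        linarith [this.1]
      have h2' : y < P.c i := by
        have := abs_lt.1 (lt_of_lt_of_le hylt (min_le_right _ _))
        linarith [this.2]
      exact ⟨Or.inl (Or.inl ⟨h1', h2'⟩), (P.hfe_eq i h1 h2 y ⟨h1', h2'⟩).symm⟩
    · exact (P.hfe_eq i h1 h2 w hw').symm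
  · -- left endpoint case: i = 1, w = c 0
    split_ifs at hw' with h
    · rcases hw' with rfl
      subst h
      have hc01 : P.c 0 < P.c 1 := P.c_lt_s16 Nat.zero_lt_one (le_trans (by norm_num) P.hN)
      refine ⟨P.c 1 - P.c 0, by linarith, ?_, P.hfe_left.symm⟩
      intro y hy hylt
      have hy0 : P.c 0 ≤ y := hy.1
      have hy1 : y < P.c 1 := by
        have := abs_lt.1 hylt
        linarith [this.2]
      rcases eq_or_lt_of_le hy0 with rfl | hy0'
      · exact ⟨Or.inl (Or.inr (by simp)), P.hfe_left.symm⟩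
      · have hmem : y ∈ Set.Ioo (P.c 0) (P.c 1) := ⟨hy0', hy1⟩
        refine ⟨Or.inl (Or.inl (by simpa using hmem)), ?_⟩
        have := P.hfe_eq 1 le_rfl (le_trans (by norm_num) P.hN) y (by simpa using hmem)
        exact this.symm
    · exact absurd hw' (Set.notMem_empty _)
  · -- right endpoint case: i = N, w = c N
    split_ifs at hw' with h
    · rcases hw' with rfl
      subst h
      have hNpos : (1:ℕ) ≤ P.N := le_trans (by norm_num) P.hN
      have hcl : P.c (P.N - 1) < P.c P.N := P.c_lt_s16 (by omega) le_rfl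
      refine ⟨P.c P.N - P.c (P.N - 1), by linarith, ?_, P.hfe_right.symm⟩
      intro y hy hylt
      have hyN : y ≤ P.c P.N := hy.2
      have hyl : P.c (P.N - 1) < y := by
        have := abs_lt.1 hylt
        linarith [this.1]
      rcases eq_or_lt_of_le hyN with rfl | hyN'
      · exact ⟨Or.inr (by simp), P.hfe_right.symm⟩
      · refine ⟨Or.inl (Or.inl ⟨hyl, hyN'⟩), (P.hfe_eq P.N hNpos le_rfl y ⟨hyl, hyN'⟩).symm⟩
    · exact absurd hw' (Set.notMem_empty _)

/-- Every non-boundary point of `X` belongs to some piece. -/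
lemma exists_piece {w : ℝ} (hw : w ∈ P.X \ P.Δ) :
    ∃ i, 1 ≤ i ∧ i ≤ P.N ∧ w ∈ P.piece i := by
  classical
  have hwX := hw.1
  have hwΔ := hw.2
  by_cases h0 : w = P.c 0
  · exact ⟨1, le_rfl, le_trans (by norm_num) P.hN, Or.inl (Or.inr (by simp [h0]))⟩
  by_cases hNn : w = P.c P.N
  · exact ⟨P.N, le_trans (by norm_num) P.hN, le_rfl, Or.inr (by simp [hNn])⟩
  · set i0 := Nat.findGreatest (fun t => P.c t < w) P.N with hi0
    have hp0 : P.c 0 < w := lt_of_le_of_ne hwX.1 (Ne.symm h0)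
    have hpi0 : P.c i0 < w := Nat.findGreatest_spec (P := fun t => P.c t < w) (m := 0) (Nat.zero_le _) hp0
    have hle : i0 ≤ P.N := Nat.findGreatest_le _
    have hi0N : i0 < P.N := by
      rcases eq_or_lt_of_le hle with hEq | h
      · rw [hEq] at hpi0; exact absurd hpi0 (not_lt.2 hwX.2)
      · exact h
    have hgt : ¬ (P.c (i0+1) < w) := Nat.findGreatest_is_greatest (Nat.lt_succ_self _) hi0N
    have hne : w ≠ P.c (i0+1) := by
      intro hEq
      rcases eq_or_lt_of_le (Nat.succ_le_of_lt hi0N) with hEq' | h'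
      · exact hNn (hEq' ▸ hEq)
      · exact hwΔ ⟨i0+1, Nat.succ_le_succ (Nat.zero_le _), h', hEq⟩
    have hlt : w < P.c (i0+1) := lt_of_le_of_ne (not_lt.1 hgt) hne
    exact ⟨i0+1, Nat.succ_le_succ (Nat.zero_le _), Nat.succ_le_of_lt hi0N,
      Or.inl (Or.inl ⟨by simpa using hpi0, hlt⟩)⟩

end PCIM
namespace PCIM
variable (P : PCIM)

lemma fe_tendsto {i : ℕ} (h1 : 1 ≤ i) (h2 : i ≤ P.N) {y : ℕ → ℝ} {w : ℝ}
    (hy : ∀ᶠ k in atTop, y k ∈ Set.Icc (P.c (i-1)) (P.c i))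
    (hw : w ∈ Set.Icc (P.c (i-1)) (P.c i))
    (hconv : Tendsto y atTop (nhds w)) :
    Tendsto (fun k => P.fe i (y k)) atTop (nhds (P.fe i w)) := by
  rw [tendsto_iff_dist_tendsto_zero]
  apply squeeze_zero' (Eventually.of_forall fun _ => dist_nonneg)
    (g := fun k => P.lam * dist (y k) w)
  · filter_upwards [hy] with k hk
    rw [Real.dist_eq, Real.dist_eq]
    exact P.hfe_lip i h1 h2 _ hk _ hw
  · have h0 : Tendsto (fun k => dist (y k) w) atTop (nhds 0) :=
      tendsto_iff_dist_tendsto_zero.mp hconv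
    simpa using h0.const_mul P.lam

lemma seq_cont {w : ℝ} (hw : w ∈ P.X \ P.Δ) {i : ℕ} (h1 : 1 ≤ i) (h2 : i ≤ P.N)
    (hwp : w ∈ P.piece i) {y : ℕ → ℝ} (hy : ∀ k, y k ∈ P.X)
    (hconv : Tendsto y atTop (nhds w)) :
    Tendsto (fun k => P.f (y k)) atTop (nhds (P.f w)) := by
  obtain ⟨ε, hε, hball, hfw⟩ := P.piece_local hw h1 h2 hwp
  have hev : ∀ᶠ k in atTop, |y k - w| < ε := by
    have := Metric.tendsto_nhds.mp hconv ε hε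
    simpa [Real.dist_eq] using this
  have hev2 : ∀ᶠ k in atTop, y k ∈ P.piece i ∧ P.f (y k) = P.fe i (y k) := by
    filter_upwards [hev] with k hk
    exact hball _ (hy k) hk
  have hIcc : ∀ᶠ k in atTop, y k ∈ Set.Icc (P.c (i-1)) (P.c i) := by
    filter_upwards [hev2] with k hk
    exact P.piece_sub_Icc h1 h2 hk.1
  have := P.fe_tendsto h1 h2 hIcc (P.piece_sub_Icc h1 h2 hwp) hconv
  rw [hfw]
  exact this.congr' (by filter_upwards [hev2] with k hk; exact hk.2.symm)

lemma shadow_s16 {x : ℝ} (hx : x ∈ P.Xt) {j : ℕ} (hj1 : 1 ≤ j) (hj2 : j < P.N)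
    (hz : P.dplus j ∈ P.Xt) {r : ℕ → ℕ}
    (hrp : ∀ k, P.f^[r k] x ∈ P.piece (j+1))
    (hrc : Tendsto (fun k => P.f^[r k] x) atTop (nhds (P.c j))) :
    ∀ m, Tendsto (fun k => P.f^[r k + 1 + m] x) atTop (nhds (P.f^[m] (P.dplus j))) := by
  have hj2' : j + 1 ≤ P.N := hj2
  have hcj : P.c j < P.c (j+1) := P.c_lt_s16 (Nat.lt_succ_self _) hj2'
  have hcIcc : P.c j ∈ Set.Icc (P.c ((j+1)-1)) (P.c (j+1)) := by
    simp only [Nat.add_sub_cancel]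
    exact ⟨le_refl _, le_of_lt hcj⟩
  have hevIoo : ∀ᶠ k in atTop, P.f^[r k] x ∈ Set.Ioo (P.c j) (P.c (j+1)) := by
    have hev : ∀ᶠ k in atTop, |P.f^[r k] x - P.c j| < P.c (j+1) - P.c j := by
      have := Metric.tendsto_nhds.mp hrc (P.c (j+1) - P.c j) (by linarith)
      simpa [Real.dist_eq] using this
    filter_upwards [hev] with k hk
    rcases hrp k with (h' | h') | h'
    · simpa using h'
    · split_ifs at h' with h
      · omega
      · exact absurd h' (Set.notMem_empty _)
    · split_ifs at h' with h
      · exfalso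
        rw [Set.mem_singleton_iff] at h'
        rw [h', ← h, abs_of_pos (by linarith)] at hk
        linarith
      · exact absurd h' (Set.notMem_empty _)
  intro m
  induction m with
  | zero =>
    simp only [Nat.add_zero, Function.iterate_succ_apply', Function.iterate_zero_apply]
    have hIcc : ∀ᶠ k in atTop, P.f^[r k] x ∈ Set.Icc (P.c ((j+1)-1)) (P.c (j+1)) := by
      filter_upwards [hevIoo] with k hk
      simp only [Nat.add_sub_cancel]
      exact Set.Ioo_subset_Icc_self hk
    have htd := P.fe_tendsto (i := j+1) (Nat.succ_le_succ (Nat.zero_le _)) hj2' hIcc hcIcc hrc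
    have heq : ∀ᶠ k in atTop, P.fe (j+1) (P.f^[r k] x) = P.f (P.f^[r k] x) := by
      filter_upwards [hevIoo] with k hk
      exact P.hfe_eq (j+1) (Nat.succ_le_succ (Nat.zero_le _)) hj2' _ (by simpa using hk)
    have : P.fe (j+1) (P.c j) = P.dplus j := rfl
    rw [← this]
    exact htd.congr' heq
  | succ m ih =>
    have hw : P.f^[m] (P.dplus j) ∈ P.X \ P.Δ := hz m
    obtain ⟨i, hi1, hi2, hip⟩ := P.exists_piece hw
    have hyX : ∀ k, P.f^[r k + 1 + m] x ∈ P.X := fun k => (hx _).1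
    have := P.seq_cont hw hi1 hi2 hip hyX ih
    have harr : ∀ k, P.f^[r k + 1 + (m+1)] x = P.f (P.f^[r k + 1 + m] x) := by
      intro k
      rw [show r k + 1 + (m+1) = (r k + 1 + m) + 1 by omega, Function.iterate_succ_apply']
    rw [Function.iterate_succ_apply']
    exact this.congr (fun k => (harr k).symm)

end PCIM
namespace PCIM
variable (P : PCIM)

lemma visit_transfer {x : ℝ} (hx : x ∈ P.Xt) {j : ℕ} (hj1 : 1 ≤ j) (hj2 : j < P.N)
    (hz : P.dplus j ∈ P.Xt) {r : ℕ → ℕ} (hr : StrictMono r)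
    (hrp : ∀ k, P.f^[r k] x ∈ P.piece (j+1))
    (hrc : Tendsto (fun k => P.f^[r k] x) atTop (nhds (P.c j)))
    {q : ℕ} (hq1 : 1 ≤ q) (hq2 : q ≤ P.N) {l : ℕ → ℕ}
    (hlp : ∀ n, P.f^[l n] (P.dplus j) ∈ P.piece q) {v : ℝ}
    (hlc : Tendsto (fun n => P.f^[l n] (P.dplus j)) atTop (nhds v)) :
    ∃ L : ℕ → ℕ, StrictMono L ∧ (∀ n, P.f^[L n] x ∈ P.piece q) ∧
      Tendsto (fun n => P.f^[L n] x) atTop (nhds v) := by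
  have H : ∀ n : ℕ, ∃ t : ℕ, n ≤ t ∧ P.f^[t] x ∈ P.piece q ∧
      dist (P.f^[t] x) (P.f^[l n] (P.dplus j)) < 1/((n:ℝ)+1) := by
    intro n
    obtain ⟨ε, hε, hball, -⟩ := P.piece_local (hz (l n)) hq1 hq2 (hlp n)
    have hsh := P.shadow_s16 hx hj1 hj2 hz hrp hrc (l n)
    have h1 : ∀ᶠ k in atTop,
        dist (P.f^[r k + 1 + l n] x) (P.f^[l n] (P.dplus j)) < min ε (1/((n:ℝ)+1)) :=
      Metric.tendsto_nhds.mp hsh _ (lt_min hε (by positivity))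
    have h2 : ∀ᶠ k in atTop, n ≤ r k := hr.tendsto_atTop.eventually_ge_atTop n
    obtain ⟨k, hk1, hk2⟩ := (h1.and h2).exists
    refine ⟨r k + 1 + l n, by omega, ?_, lt_of_lt_of_le hk1 (min_le_right _ _)⟩
    exact (hball _ (hx _).1 (by rw [← Real.dist_eq]; exact lt_of_lt_of_le hk1 (min_le_left _ _))).1
  choose s hs1 hs2 hs3 using H
  have hsv : Tendsto (fun n => P.f^[s n] x) atTop (nhds v) := by
    rw [tendsto_iff_dist_tendsto_zero]
    apply squeeze_zero (fun n => dist_nonneg)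
      (g := fun n : ℕ => 1/((n:ℝ)+1) + dist (P.f^[l n] (P.dplus j)) v)
    · intro n
      calc dist (P.f^[s n] x) v
          ≤ dist (P.f^[s n] x) (P.f^[l n] (P.dplus j)) + dist (P.f^[l n] (P.dplus j)) v :=
            dist_triangle _ _ _
        _ ≤ 1/((n:ℝ)+1) + dist (P.f^[l n] (P.dplus j)) v := by
            linarith [hs3 n]
    · have ha : Tendsto (fun n : ℕ => 1/((n:ℝ)+1)) atTop (nhds 0) :=
        tendsto_one_div_add_atTop_nhds_zero_nat
      have hb := tendsto_iff_dist_tendsto_zero.mp hlc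
      simpa using ha.add hb
  obtain ⟨φ, hφ, hsφ⟩ := strictMono_subseq_of_id_le hs1
  exact ⟨s ∘ φ, hsφ, fun n => hs2 _, hsv.comp hφ.tendsto_atTop⟩

lemma chain (hD : P.D ⊆ P.Xt) {x : ℝ} (hx : x ∈ P.Xt) {i j : ℕ}
    (hxj : P.lrVisited x j) (hji : P.lrVisited (P.dplus j) i) : P.lrVisited x i := by
  obtain ⟨hj1, hj2, lx, rx, hlx, hrx, hlxp, hrxp, hlxc, hrxc⟩ := hxj
  have hz : P.dplus j ∈ P.Xt := hD (Or.inl (Or.inr ⟨j, hj1, hj2, rfl⟩))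
  obtain ⟨hi1, hi2, lz, rz, hlz, hrz, hlzp, hrzp, hlzc, hrzc⟩ := hji
  obtain ⟨L, hL, hLp, hLc⟩ := P.visit_transfer hx hj1 hj2 hz hrx hrxp hrxc
    hi1 (le_of_lt hi2) hlzp hlzc
  obtain ⟨R, hR, hRp, hRc⟩ := P.visit_transfer hx hj1 hj2 hz hrx hrxp hrxc
    (Nat.succ_le_succ (Nat.zero_le _)) hi2 hrzp hrzc
  exact ⟨hi1, hi2, L, R, hL, hR, hLp, hRp, hLc, hRc⟩

end PCIM
namespace PCIM
variable (P : PCIM)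

lemma inΔlr_bounds {i : ℕ} (h : P.inΔlr i) : 1 ≤ i ∧ i < P.N := by
  obtain ⟨x, -, h1, h2, -⟩ := h
  exact ⟨h1, h2⟩

lemma simP_symm {a b : ℝ} (h : P.simP a b) : P.simP b a := by
  rcases h with rfl | ⟨i, j, hi, hj, ha, hb, h1, h2⟩
  · exact Or.inl rfl
  · exact Or.inr ⟨j, i, hj, hi, hb, ha, h2, h1⟩

lemma pre_cases {a b : ℝ} (h : P.preP a b) :
    a = b ∨ ∃ i j, P.inΔlr i ∧ P.inΔlr j ∧ a = P.c i ∧ b = P.c j ∧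
      P.lrVisited (P.dplus j) i := by
  rcases h with (rfl | ⟨i, j, hi, hj, ha, hb, h1, h2⟩) | ⟨i, j, hi, hj, ha, hb, h1⟩
  · exact Or.inl rfl
  · exact Or.inr ⟨i, j, hi, hj, ha, hb, h1⟩
  · exact Or.inr ⟨i, j, hi, hj, ha, hb, h1⟩

lemma preP_trans (hD : P.D ⊆ P.Xt) {a b c' : ℝ} (hab : P.preP a b) (hbc : P.preP b c') :
    P.preP a c' := by
  rcases P.pre_cases hab with rfl | ⟨i, j, hi, hj, ha, hb, h1⟩
  · exact hbc
  rcases P.pre_cases hbc with rfl | ⟨j', k, hj', hk, hb', hc, h2⟩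
  · exact Or.inr ⟨i, j, hi, hj, ha, hb, h1⟩
  have hjb := P.inΔlr_bounds hj
  have hjb' := P.inΔlr_bounds hj'
  have hkb := P.inΔlr_bounds hk
  have hjj : j = j' := P.c_inj (le_of_lt hjb.2) (le_of_lt hjb'.2) (hb ▸ hb' ▸ rfl)
  subst hjj
  have hz : P.dplus k ∈ P.Xt := hD (Or.inl (Or.inr ⟨k, hkb.1, hkb.2, rfl⟩))
  exact Or.inr ⟨i, k, hi, hk, ha, hc, P.chain hD hz h2 h1⟩

end PCIM
/-- If `D ⊆ X̃`, the relation `≼⁺` is well defined on `Δ_lr/∼⁺` (independent of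
representatives) and is reflexive, antisymmetric (up to `∼⁺`) and transitive on
`Δ_lr`, i.e. it is a partial order on the quotient `Δ_lr/∼⁺`. -/
theorem stmt16 (P : PCIM) (hD : P.D ⊆ P.Xt) :
    (∀ a a1 b b1, a ∈ P.ΔlrSet → a1 ∈ P.ΔlrSet → b ∈ P.ΔlrSet → b1 ∈ P.ΔlrSet →
      P.simP a a1 → P.simP b b1 → (P.preP a b ↔ P.preP a1 b1)) ∧
    (∀ a ∈ P.ΔlrSet, P.preP a a) ∧
    (∀ a ∈ P.ΔlrSet, ∀ b ∈ P.ΔlrSet, P.preP a b → P.preP b a → P.simP a b) ∧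
    (∀ a ∈ P.ΔlrSet, ∀ b ∈ P.ΔlrSet, ∀ c ∈ P.ΔlrSet,
      P.preP a b → P.preP b c → P.preP a c) := by
  refine ⟨?_, ?_, ?_, ?_⟩
  · intro a a1 b b1 _ _ _ _ haa hbb
    constructor
    · intro h
      exact P.preP_trans hD (P.preP_trans hD (Or.inl (P.simP_symm haa)) h) (Or.inl hbb)
    · intro h
      exact P.preP_trans hD (P.preP_trans hD (Or.inl haa) h) (Or.inl (P.simP_symm hbb))
  · intro a _
    exact Or.inl (Or.inl rfl)
  · intro a _ b _ hab hba
    rcases P.pre_cases hab with rfl | ⟨i, j, hi, hj, ha, hb, h1⟩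
    · exact Or.inl rfl
    rcases P.pre_cases hba with hEq | ⟨j', i', hj', hi', hb', ha', h2⟩
    · exact Or.inl hEq.symm
    have hib := P.inΔlr_bounds hi
    have hjb := P.inΔlr_bounds hj
    have hib' := P.inΔlr_bounds hi'
    have hjb' := P.inΔlr_bounds hj'
    have hii : i = i' := P.c_inj (le_of_lt hib.2) (le_of_lt hib'.2) (ha ▸ ha' ▸ rfl)
    have hjj : j = j' := P.c_inj (le_of_lt hjb.2) (le_of_lt hjb'.2) (hb ▸ hb' ▸ rfl)
    subst hii; subst hjj
    exact Or.inr ⟨i, j, hi, hj, ha, hb, h1, h2⟩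
  · intro a _ b _ c' _ hab hbc
    exact P.preP_trans hD hab hbc
end
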